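/- Fix a 4-list assignment (ℓ_i)_{i≥1} and for each n let T_n be the set of square-free words of length n respecting it. Let β > 1 be a real number such that 1 + √3 − 1/(β(β−1)) ≥ β. Then for every n ≥ 3, the weighted count satisfies T̂_{n+1} ≥ β · T̂_n, where for a set S of words of length ≥ 3, Ŝ = (number of perfect words in S) + (√3 − 1)·(number of nice words in S). -/

import Mathlib

/-- A word is square-free if no factor of it is a square `u ++ u` with `u` nonempty. -/
def SquareFree {α : Type*} (w : List α) : Prop :=
  ∀ u : List α, u ≠ [] → ¬ (u ++ u) <:+: w

/-- A word `w` respects the list assignment `ℓ` if its `i`-th letter belongs to `ℓ i`. -/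
def Respects {α : Type*} (ℓ : ℕ → Finset α) (w : List α) : Prop :=
  ∀ (i : ℕ) (h : i < w.length), w[i] ∈ ℓ i

/-- A word is perfect if its suffix of length 3 consists of three pairwise distinct letters. -/
def PerfectWord {α : Type*} (w : List α) : Prop :=
  ∃ a b c : α, a ≠ b ∧ a ≠ c ∧ b ≠ c ∧ [a, b, c] <:+ w

/-- A word is nice if its suffix of length 3 is of the form `aba` with `a ≠ b`. -/
def NiceWord {α : Type*} (w : List α) : Prop :=
  ∃ a b : α, a ≠ b ∧ [a, b, a] <:+ w

/-- The weighted count of a set of words: the number of perfect words plus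
`√3 - 1` times the number of nice words. -/
noncomputable def hatCount {α : Type*} (S : Set (List α)) : ℝ :=
  ({w ∈ S | PerfectWord w}.ncard : ℝ) + (Real.sqrt 3 - 1) * ({w ∈ S | NiceWord w}.ncard : ℝ)

/-!
Weigh a word 1 if it is perfect, `√3 - 1` if it is nice and 0 otherwise, so that `T̂ₙ` is the
total weight of `Tₙ`. Among the extensions `wx` (`x ∈ ℓₙ`) of a square-free word `w` ending in
`yz`, the at least three letters `x ≠ z` give weight at least `2 + (√3 - 1) = 1 + √3`, which is
`(1 + √3)` times the weight of `w`, plus `√3 - 1` when `w` is nice. An extension that is not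
square-free ends in a square `uu`; with `p = |u|` minimal, it has weight 0 if `p = 1`; if `p = 2`
then `w` is nice, has the same weight, and determines `x`; if `p ≥ 3` the extension is determined
by its prefix of length `n + 1 - p`, which lies in `T_{n+1-p}` and has the same weight. Hence
`(1 + √3) T̂ₙ - ∑_{p=3}^{n+1} T̂_{n+1-p} ≤ T̂_{n+1}`, and by strong induction
`T̂_{n+1-p} ≤ β^{-(p-1)} T̂ₙ`, where `∑_{p ≥ 3} β^{-(p-1)} = 1 / (β (β - 1))`.
-/

open Finset

lemma sum_le_sum_of_injOn {ι κ M : Type*} [AddCommMonoid M] [PartialOrder M]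
    [IsOrderedAddMonoid M] {s : Finset ι} {t : Finset κ} (e : ι → κ)
    (hmaps : Set.MapsTo e s t) (hinj : Set.InjOn e s) {f : ι → M} {g : κ → M}
    (hfg : ∀ i ∈ s, f i ≤ g (e i)) (hg : ∀ j ∈ t, 0 ≤ g j) :
    ∑ i ∈ s, f i ≤ ∑ j ∈ t, g j := by
  classical
  calc ∑ i ∈ s, f i ≤ ∑ i ∈ s, g (e i) := sum_le_sum hfg
    _ = ∑ j ∈ s.image e, g j := (sum_image hinj).symm
    _ ≤ ∑ j ∈ t, g j :=
      sum_le_sum_of_subset_of_nonneg (image_subset_iff.2 hmaps) fun j hj _ => hg j hj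

lemma one_le_sqrt_three : 1 ≤ √3 := by
  rw [Real.one_le_sqrt]; norm_num

lemma sqrt_three_le_two : √3 ≤ 2 := by
  rw [Real.sqrt_le_left (by norm_num)]; norm_num

section Words

variable {α : Type*}

lemma SquareFree.of_infix {v w : List α} (hw : SquareFree w) (h : v <:+: w) : SquareFree v :=
  fun u hu huv => hw u hu (huv.trans h)

lemma SquareFree.ne_of_infix {w : List α} {a b : α} (hw : SquareFree w) (h : [a, b] <:+: w) :
    a ≠ b := by
  rintro rfl
  exact hw [a] (List.cons_ne_nil _ _) h

lemma List.suffix_iff_of_suffix {s t w : List α} (ht : t <:+ w) (hst : s.length ≤ t.length) :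
    s <:+ w ↔ s <:+ t :=
  ⟨fun hs => List.suffix_of_suffix_length_le hs ht hst, fun hs => hs.trans ht⟩

lemma List.eq_of_suffix_of_length_eq {s t w : List α} (hs : s <:+ w) (ht : t <:+ w)
    (h : s.length = t.length) : s = t :=
  (List.suffix_of_suffix_length_le hs ht h.le).eq_of_length h

lemma List.exists_suffix_of_length_le {w : List α} {k : ℕ} (h : k ≤ w.length) :
    ∃ t, t.length = k ∧ t <:+ w :=
  ⟨w.drop (w.length - k), by rw [List.length_drop]; omega, List.drop_suffix _ _⟩

lemma SquareFree.perfectWord_or_niceWord {w : List α} (hw : SquareFree w)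
    (h3 : 3 ≤ w.length) : PerfectWord w ∨ NiceWord w := by
  obtain ⟨t, ht3, ht⟩ := List.exists_suffix_of_length_le h3
  obtain ⟨a, b, c, rfl⟩ := List.length_eq_three.mp ht3
  have hab : a ≠ b := hw.ne_of_infix (List.IsInfix.trans ⟨[], [c], rfl⟩ ht.isInfix)
  have hbc : b ≠ c := hw.ne_of_infix (List.IsInfix.trans ⟨[a], [], rfl⟩ ht.isInfix)
  by_cases hac : a = c
  · subst hac; exact Or.inr ⟨a, b, hab, ht⟩
  · exact Or.inl ⟨a, b, c, hab, hac, hbc, ht⟩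

lemma NiceWord.not_perfectWord {w : List α} (h : NiceWord w) : ¬ PerfectWord w := by
  obtain ⟨a, b, -, hn⟩ := h
  rintro ⟨a', b', c', -, hac, -, hp⟩
  obtain ⟨rfl, -, rfl⟩ : a = a' ∧ b = b' ∧ a = c' := by
    simpa using List.eq_of_suffix_of_length_eq hn hp rfl
  exact hac rfl

lemma perfectWord_iff_of_suffix {t w : List α} (ht : t <:+ w) (h3 : 3 ≤ t.length) :
    PerfectWord w ↔ PerfectWord t := by
  simp only [PerfectWord, List.suffix_iff_of_suffix ht (s := [_, _, _]) h3]

lemma niceWord_iff_of_suffix {t w : List α} (ht : t <:+ w) (h3 : 3 ≤ t.length) :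
    NiceWord w ↔ NiceWord t := by
  simp only [NiceWord, List.suffix_iff_of_suffix ht (s := [_, _, _]) h3]

open Classical in
noncomputable def weight (w : List α) : ℝ :=
  if PerfectWord w then 1 else if NiceWord w then √3 - 1 else 0

lemma weight_of_perfectWord {w : List α} (h : PerfectWord w) : weight w = 1 := by
  simp [weight, h]

lemma weight_of_niceWord {w : List α} (h : NiceWord w) : weight w = √3 - 1 := by
  simp [weight, h, h.not_perfectWord]

lemma weight_eq_zero {w : List α} (hp : ¬ PerfectWord w) (hn : ¬ NiceWord w) : weight w = 0 := by
  simp [weight, hp, hn]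

lemma weight_nonneg (w : List α) : 0 ≤ weight w := by
  unfold weight; split_ifs <;> linarith [one_le_sqrt_three]

open Classical in
lemma weight_eq_ite (w : List α) :
    weight w = (if PerfectWord w then 1 else 0) + (√3 - 1) * (if NiceWord w then 1 else 0) := by
  by_cases hn : NiceWord w
  · simp [weight_of_niceWord hn, hn, hn.not_perfectWord]
  · by_cases hp : PerfectWord w <;> simp [weight, hp, hn]

lemma weight_eq_of_suffix {t w : List α} (ht : t <:+ w) (h3 : 3 ≤ t.length) :
    weight w = weight t := by
  rw [weight, weight, perfectWord_iff_of_suffix ht h3, niceWord_iff_of_suffix ht h3]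

lemma weight_eq_zero_of_length_lt {w : List α} (h : w.length < 3) : weight w = 0 := by
  refine weight_eq_zero ?_ ?_
  · rintro ⟨a, b, c, -, -, -, hs⟩
    exact (hs.length_le.trans_lt h).false
  · rintro ⟨a, b, -, hs⟩
    exact (hs.length_le.trans_lt h).false

lemma weight_eq_zero_of_suffix {w : List α} {a : α} (h : [a, a] <:+ w) : weight w = 0 := by
  refine weight_eq_zero ?_ ?_
  · rintro ⟨x, y, z, -, -, hyz, hs⟩
    obtain ⟨rfl, rfl⟩ : a = y ∧ a = z := by
      simpa using List.eq_of_suffix_of_length_eq h ((List.suffix_cons x _).trans hs) rfl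
    exact hyz rfl
  · rintro ⟨x, y, hxy, hs⟩
    obtain ⟨rfl, rfl⟩ : a = y ∧ a = x := by
      simpa using List.eq_of_suffix_of_length_eq h ((List.suffix_cons x _).trans hs) rfl
    exact hxy rfl

lemma hatCount_coe (s : Finset (List α)) : hatCount (s : Set (List α)) = ∑ w ∈ s, weight w := by
  classical
  have hcard (p : List α → Prop) [DecidablePred p] :
      {w ∈ (s : Set (List α)) | p w}.ncard = #(s.filter p) := by
    rw [← Set.ncard_coe_finset, coe_filter]; rfl
  simp only [hatCount, hcard, weight_eq_ite, sum_add_distrib, ← mul_sum, sum_boole]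

end Words

section SquareSuffix

variable {α : Type*}

def HasSquareSuffix (v : List α) (p : ℕ) : Prop :=
  ∃ u : List α, u.length = p ∧ u ++ u <:+ v

lemma HasSquareSuffix.two_mul_le_length {v : List α} {p : ℕ} (h : HasSquareSuffix v p) :
    2 * p ≤ v.length := by
  obtain ⟨u, rfl, hu⟩ := h
  simpa [two_mul] using hu.length_le

lemma SquareFree.exists_hasSquareSuffix_append {w : List α} {x : α} (hw : SquareFree w)
    (h : ¬ SquareFree (w ++ [x])) : ∃ p, 0 < p ∧ HasSquareSuffix (w ++ [x]) p := by
  simp only [SquareFree, not_forall, not_not] at h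
  obtain ⟨u, hu, hinf⟩ := h
  rcases List.infix_concat_iff.mp hinf with hsuf | hinf
  · exact ⟨u.length, List.length_pos_iff.mpr hu, u, rfl, hsuf⟩
  · exact absurd hinf (hw u hu)

lemma HasSquareSuffix.weight_eq_zero {v : List α} (h : HasSquareSuffix v 1) : weight v = 0 := by
  obtain ⟨u, hu, hsuf⟩ := h
  obtain ⟨a, rfl⟩ := List.length_eq_one_iff.mp hu
  exact weight_eq_zero_of_suffix hsuf

lemma hasSquareSuffix_two_append_iff {w : List α} {x : α} :
    HasSquareSuffix (w ++ [x]) 2 ↔ ∃ a, [a, x, a] <:+ w := by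
  constructor
  · rintro ⟨u, hu, hsuf⟩
    obtain ⟨a, b, rfl⟩ := List.length_eq_two.mp hu
    obtain ⟨h, hb⟩ :=
      (List.suffix_append_inj_of_length_eq (l₁ := [a, b, a]) (s₁ := [b]) (s₂ := [x]) rfl).mp hsuf
    obtain rfl : b = x := List.singleton_inj.mp hb
    exact ⟨a, h⟩
  · rintro ⟨a, h⟩
    exact ⟨[a, x], rfl, (List.suffix_append_inj_of_length_eq (l₁ := [a, x, a]) rfl).mpr ⟨h, rfl⟩⟩

lemma SquareFree.niceWord_of_hasSquareSuffix_two_append {w : List α} {x : α} (hw : SquareFree w)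
    (h : HasSquareSuffix (w ++ [x]) 2) : NiceWord w := by
  obtain ⟨a, ha⟩ := hasSquareSuffix_two_append_iff.mp h
  exact ⟨a, x, hw.ne_of_infix (List.IsInfix.trans ⟨[], [a], rfl⟩ ha.isInfix), ha⟩

lemma SquareFree.weight_append_of_hasSquareSuffix_two {w : List α} {x : α} (hw : SquareFree w)
    (h : HasSquareSuffix (w ++ [x]) 2) : weight (w ++ [x]) = weight w := by
  obtain ⟨a, ha⟩ := hasSquareSuffix_two_append_iff.mp h
  have hax : a ≠ x := hw.ne_of_infix (List.IsInfix.trans ⟨[], [a], rfl⟩ ha.isInfix)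
  have hxax : [x, a, x] <:+ w ++ [x] :=
    List.IsSuffix.trans ⟨[a], rfl⟩ ((List.suffix_append_inj_of_length_eq rfl).mpr ⟨ha, rfl⟩)
  rw [weight_of_niceWord ⟨x, a, hax.symm, hxax⟩, weight_of_niceWord ⟨a, x, hax, ha⟩]

lemma eq_of_hasSquareSuffix_two_append {w : List α} {x y : α}
    (hx : HasSquareSuffix (w ++ [x]) 2) (hy : HasSquareSuffix (w ++ [y]) 2) : x = y := by
  obtain ⟨a, ha⟩ := hasSquareSuffix_two_append_iff.mp hx
  obtain ⟨b, hb⟩ := hasSquareSuffix_two_append_iff.mp hy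
  have h := List.eq_of_suffix_of_length_eq ha hb rfl
  simp only [List.cons.injEq] at h
  exact h.2.1

lemma HasSquareSuffix.exists_eq_take_append {v : List α} {p : ℕ} (h : HasSquareSuffix v p) :
    ∃ u, u.length = p ∧ u <:+ v.take (v.length - p) ∧ v = v.take (v.length - p) ++ u := by
  obtain ⟨u, rfl, s, rfl⟩ := h
  have htake : (s ++ (u ++ u)).take ((s ++ (u ++ u)).length - u.length) = s ++ u := by
    rw [← List.append_assoc, List.take_left' (by simp; omega)]
  exact ⟨u, rfl, htake ▸ List.suffix_append s u, by rw [htake, List.append_assoc]⟩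

lemma HasSquareSuffix.weight_take {v : List α} {p : ℕ} (h : HasSquareSuffix v p) (hp : 3 ≤ p) :
    weight (v.take (v.length - p)) = weight v := by
  obtain ⟨u, rfl, hu, hv⟩ := h.exists_eq_take_append
  rw [weight_eq_of_suffix hu hp, weight_eq_of_suffix ⟨_, hv.symm⟩ hp]

lemma HasSquareSuffix.eq_of_take_eq {v v' : List α} {p : ℕ} (h : HasSquareSuffix v p)
    (h' : HasSquareSuffix v' p) (htake : v.take (v.length - p) = v'.take (v'.length - p)) :
    v = v' := by
  obtain ⟨u, hu, hsuf, hv⟩ := h.exists_eq_take_append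
  obtain ⟨u', hu', hsuf', hv'⟩ := h'.exists_eq_take_append
  rw [← htake] at hsuf' hv'
  rw [hv, hv', List.eq_of_suffix_of_length_eq hsuf hsuf' (hu.trans hu'.symm)]

end SquareSuffix

section WordSets

variable {α : Type*}

lemma respects_append_singleton_iff {ℓ : ℕ → Finset α} {w : List α} {x : α} :
    Respects ℓ (w ++ [x]) ↔ Respects ℓ w ∧ x ∈ ℓ w.length := by
  simp only [Respects, List.length_append, List.length_singleton]
  constructor
  · intro h
    refine ⟨fun i hi => ?_, by simpa using h w.length (by omega)⟩
    simpa [List.getElem_append_left hi] using h i (by omega)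
  · rintro ⟨h, hx⟩ i hi
    rcases Nat.lt_succ_iff_lt_or_eq.mp hi with hi | rfl
    · simpa [List.getElem_append_left hi] using h i hi
    · simpa using hx

lemma Respects.take {ℓ : ℕ → Finset α} {w : List α} (h : Respects ℓ w) (k : ℕ) :
    Respects ℓ (w.take k) := fun i hi => by
  simpa using h i (by simp at hi; omega)

variable [DecidableEq α]

def appendLetters (W : Finset (List α)) (L : Finset α) : Finset (List α) :=
  (W ×ˢ L).image fun q => q.1 ++ [q.2]

lemma mem_appendLetters {W : Finset (List α)} {L : Finset α} {v : List α} :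
    v ∈ appendLetters W L ↔ ∃ w ∈ W, ∃ x ∈ L, w ++ [x] = v := by
  simp [appendLetters, and_assoc]

lemma append_singleton_mem_appendLetters {W : Finset (List α)} {L : Finset α} {w : List α}
    {x : α} : w ++ [x] ∈ appendLetters W L ↔ w ∈ W ∧ x ∈ L := by
  simp [mem_appendLetters]

lemma sum_appendLetters {M : Type*} [AddCommMonoid M] (W : Finset (List α)) (L : Finset α)
    (f : List α → M) : ∑ v ∈ appendLetters W L, f v = ∑ w ∈ W, ∑ x ∈ L, f (w ++ [x]) := by
  rw [appendLetters, sum_image (fun q _ q' _ h => by simpa [Prod.ext_iff] using h), sum_product]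

open Classical in
noncomputable def sqFreeWords (ℓ : ℕ → Finset α) : ℕ → Finset (List α)
  | 0 => {[]}
  | n + 1 => (appendLetters (sqFreeWords ℓ n) (ℓ n)).filter SquareFree

variable {ℓ : ℕ → Finset α}

lemma mem_sqFreeWords {n : ℕ} {w : List α} :
    w ∈ sqFreeWords ℓ n ↔ w.length = n ∧ SquareFree w ∧ Respects ℓ w := by
  induction n generalizing w with
  | zero =>
    simp only [sqFreeWords, mem_singleton, List.length_eq_zero_iff, iff_self_and]
    rintro rfl
    exact ⟨fun u hu h => hu (by simpa using h), fun i hi => by simp at hi⟩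
  | succ n ih =>
    rcases w.eq_nil_or_concat with rfl | ⟨u, x, rfl⟩
    · simp [sqFreeWords, mem_appendLetters]
    · simp only [sqFreeWords, mem_filter, List.concat_eq_append, append_singleton_mem_appendLetters,
        ih, respects_append_singleton_iff, List.length_append, List.length_singleton]
      constructor
      · rintro ⟨⟨⟨rfl, -, hr⟩, hx⟩, hsf⟩
        exact ⟨rfl, hsf, hr, hx⟩
      · rintro ⟨hl, hsf, hr, hx⟩
        obtain rfl : u.length = n := by omega
        exact ⟨⟨⟨rfl, hsf.of_infix (List.prefix_append u [x]).isInfix, hr⟩, hx⟩, hsf⟩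

lemma take_mem_sqFreeWords {n k : ℕ} {w : List α} (hw : w ∈ sqFreeWords ℓ n) (hk : k ≤ n) :
    w.take k ∈ sqFreeWords ℓ k := by
  obtain ⟨hlen, hsf, hres⟩ := mem_sqFreeWords.mp hw
  exact mem_sqFreeWords.mpr ⟨by simp; omega, hsf.of_infix (w.take_prefix k).isInfix, hres.take k⟩

lemma coe_sqFreeWords (ℓ : ℕ → Finset α) (n : ℕ) :
    (sqFreeWords ℓ n : Set (List α)) = {w | w.length = n ∧ SquareFree w ∧ Respects ℓ w} := by
  ext w; exact mem_sqFreeWords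

end WordSets

section Counting

variable {α : Type*}

lemma SquareFree.one_add_sqrt_three_le_sum_weight_append [DecidableEq α] {w : List α} {L : Finset α}
    (hw : SquareFree w) (h2 : 2 ≤ w.length) (hL : 4 ≤ #L) :
    1 + √3 ≤ ∑ x ∈ L, weight (w ++ [x]) := by
  obtain ⟨t, ht2, ht⟩ := List.exists_suffix_of_length_le h2
  obtain ⟨y, z, rfl⟩ := List.length_eq_two.mp ht2
  have hyz : y ≠ z := hw.ne_of_infix ht.isInfix
  have hsuf (x : α) : [y, z, x] <:+ w ++ [x] :=
    (List.suffix_append_inj_of_length_eq rfl).mpr ⟨ht, rfl⟩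
  have hperfect (x : α) (hxy : x ≠ y) (hxz : x ≠ z) : weight (w ++ [x]) = 1 :=
    weight_of_perfectWord ⟨y, z, x, hyz, hxy.symm, hxz.symm, hsuf x⟩
  have hnice : weight (w ++ [y]) = √3 - 1 := weight_of_niceWord ⟨y, z, hyz, hsuf y⟩
  have hcard : 3 ≤ #(L.erase z) := by
    have := pred_card_le_card_erase (s := L) (a := z); omega
  calc 1 + √3 ≤ ∑ x ∈ L.erase z, weight (w ++ [x]) := ?_
    _ ≤ ∑ x ∈ L, weight (w ++ [x]) :=
      sum_le_sum_of_subset_of_nonneg (erase_subset z L) fun x _ _ => weight_nonneg _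
  by_cases hy : y ∈ L.erase z
  · rw [← add_sum_erase _ _ hy, hnice, sum_congr rfl fun x hx =>
      hperfect x (ne_of_mem_erase hx) (ne_of_mem_erase (mem_of_mem_erase hx)),
      sum_const, card_erase_of_mem hy, nsmul_one]
    have : (2 : ℝ) ≤ ((#(L.erase z) - 1 : ℕ) : ℝ) := by exact_mod_cast (by omega)
    linarith
  · rw [sum_congr rfl fun x hx => hperfect x (fun h => hy (h ▸ hx)) (ne_of_mem_erase hx),
      sum_const, nsmul_one]
    have : (3 : ℝ) ≤ #(L.erase z) := by exact_mod_cast hcard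
    linarith [sqrt_three_le_two]

open Classical in
lemma one_add_sqrt_three_mul_weight_add_ite {w : List α} (h : PerfectWord w ∨ NiceWord w) :
    (1 + √3) * weight w + (if NiceWord w then weight w else 0) = 1 + √3 := by
  rcases h with hp | hn
  · rw [if_neg fun hn => hn.not_perfectWord hp, weight_of_perfectWord hp]
    ring
  · rw [if_pos hn, weight_of_niceWord hn]
    linear_combination Real.sq_sqrt (show (0 : ℝ) ≤ 3 by norm_num)

open Classical in
lemma sum_weight_le_of_hasSquareSuffix_two {B W : Finset (List α)}
    (hW : ∀ w ∈ W, SquareFree w) (hB : ∀ v ∈ B, ∃ w ∈ W, ∃ x, w ++ [x] = v ∧ HasSquareSuffix v 2) :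
    ∑ v ∈ B, weight v ≤ ∑ w ∈ W.filter NiceWord, weight w := by
  refine sum_le_sum_of_injOn List.dropLast (fun v hv => ?_) (fun v hv v' hv' h => ?_)
    (fun v hv => ?_) fun w _ => weight_nonneg w
  · obtain ⟨w, hw, x, rfl, h⟩ := hB v hv
    simpa using ⟨hw, (hW w hw).niceWord_of_hasSquareSuffix_two_append h⟩
  · obtain ⟨w, -, x, rfl, hx⟩ := hB v hv
    obtain ⟨w', -, x', rfl, hx'⟩ := hB v' hv'
    obtain rfl : w = w' := by simpa using h
    rw [eq_of_hasSquareSuffix_two_append hx hx']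
  · obtain ⟨w, hw, x, rfl, h⟩ := hB v hv
    simp [(hW w hw).weight_append_of_hasSquareSuffix_two h]

lemma sum_weight_le_of_hasSquareSuffix {B W : Finset (List α)} {k p : ℕ} (hp : 3 ≤ p)
    (hB : ∀ v ∈ B, v.length = k + p ∧ HasSquareSuffix v p ∧ v.take k ∈ W) :
    ∑ v ∈ B, weight v ≤ ∑ w ∈ W, weight w := by
  have hk : ∀ v ∈ B, v.length - p = k := fun v hv => by rw [(hB v hv).1]; omega
  refine sum_le_sum_of_injOn (·.take k) (fun v hv => (hB v hv).2.2) (fun v hv v' hv' h => ?_)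
    (fun v hv => ?_) fun w _ => weight_nonneg w
  · exact (hB v hv).2.1.eq_of_take_eq (hB v' hv').2.1 (by rw [hk v hv, hk v' hv']; exact h)
  · rw [← (hB v hv).2.1.weight_take hp, hk v hv]

end Counting

section Recurrence

variable {α : Type*} [DecidableEq α] (ℓ : ℕ → Finset α)

noncomputable def weightedCount (n : ℕ) : ℝ :=
  ∑ w ∈ sqFreeWords ℓ n, weight w

lemma weightedCount_nonneg (n : ℕ) : 0 ≤ weightedCount ℓ n :=
  sum_nonneg fun w _ => weight_nonneg w

lemma weightedCount_of_lt_three {n : ℕ} (hn : n < 3) : weightedCount ℓ n = 0 :=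
  sum_eq_zero fun _ hw => weight_eq_zero_of_length_lt ((mem_sqFreeWords.mp hw).1 ▸ hn)

noncomputable def squarePeriod (v : List α) : ℕ :=
  sInf {p | 0 < p ∧ HasSquareSuffix v p}

open Classical in
lemma sum_weight_filter_not_squareFree_le (n : ℕ) :
    ∑ v ∈ (appendLetters (sqFreeWords ℓ n) (ℓ n)).filter (¬ SquareFree ·), weight v ≤
      ∑ w ∈ (sqFreeWords ℓ n).filter NiceWord, weight w +
        ∑ p ∈ Icc 3 (n + 1), weightedCount ℓ (n + 1 - p) := by
  set B := (appendLetters (sqFreeWords ℓ n) (ℓ n)).filter (¬ SquareFree ·)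
  have hB : ∀ v ∈ B, ∃ w ∈ sqFreeWords ℓ n, ∃ x, w ++ [x] = v ∧
      0 < squarePeriod v ∧ HasSquareSuffix v (squarePeriod v) := by
    intro v hv
    obtain ⟨hv, hsf⟩ := mem_filter.mp hv
    obtain ⟨w, hw, x, -, rfl⟩ := mem_appendLetters.mp hv
    exact ⟨w, hw, x, rfl,
      Nat.sInf_mem ((mem_sqFreeWords.mp hw).2.1.exists_hasSquareSuffix_append hsf)⟩
  have hmaps : ∀ v ∈ B, squarePeriod v ∈ insert 1 (insert 2 (Icc 3 (n + 1))) := by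
    intro v hv
    obtain ⟨w, hw, x, rfl, hpos, hsq⟩ := hB v hv
    have := hsq.two_mul_le_length
    simp only [mem_insert, mem_Icc, List.length_append, (mem_sqFreeWords.mp hw).1,
      List.length_singleton] at this ⊢
    omega
  set F := fun p => ∑ v ∈ B.filter (squarePeriod · = p), weight v
  have hF1 : F 1 = 0 := sum_eq_zero fun v hv => by
    obtain ⟨hvB, hp⟩ := mem_filter.mp hv
    obtain ⟨-, -, -, -, -, hsq⟩ := hB v hvB
    exact HasSquareSuffix.weight_eq_zero (hp ▸ hsq)
  have hF2 : F 2 ≤ ∑ w ∈ (sqFreeWords ℓ n).filter NiceWord, weight w :=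
    sum_weight_le_of_hasSquareSuffix_two (fun w hw => (mem_sqFreeWords.mp hw).2.1) fun v hv => by
      obtain ⟨hvB, hp⟩ := mem_filter.mp hv
      obtain ⟨w, hw, x, hwx, -, hsq⟩ := hB v hvB
      exact ⟨w, hw, x, hwx, hp ▸ hsq⟩
  have hF3 : ∀ p ∈ Icc 3 (n + 1), F p ≤ weightedCount ℓ (n + 1 - p) := fun p hp =>
    have hp := mem_Icc.mp hp
    sum_weight_le_of_hasSquareSuffix (k := n + 1 - p) hp.1 fun v hv => by
      obtain ⟨hvB, rfl⟩ := mem_filter.mp hv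
      obtain ⟨w, hw, x, rfl, -, hsq⟩ := hB _ hvB
      have hw' := (mem_sqFreeWords.mp hw).1
      refine ⟨by simp [hw']; omega, hsq, ?_⟩
      rw [List.take_append_of_le_length (by omega)]
      exact take_mem_sqFreeWords hw (by omega)
  calc ∑ v ∈ B, weight v = F 1 + (F 2 + ∑ p ∈ Icc 3 (n + 1), F p) := by
        rw [← sum_fiberwise_of_maps_to hmaps, sum_insert (by simp), sum_insert (by simp)]
    _ ≤ _ := by
      rw [hF1, zero_add]
      exact add_le_add hF2 (sum_le_sum hF3)

variable {ℓ} in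
lemma weightedCount_recurrence {n : ℕ} (hL : 4 ≤ #(ℓ n)) :
    (1 + √3) * weightedCount ℓ n - ∑ p ∈ Icc 3 (n + 1), weightedCount ℓ (n + 1 - p) ≤
      weightedCount ℓ (n + 1) := by
  classical
  have hsum := sum_nonneg fun p (_ : p ∈ Icc 3 (n + 1)) => weightedCount_nonneg ℓ (n + 1 - p)
  rcases lt_or_ge n 3 with hn | hn
  · rw [weightedCount_of_lt_three ℓ hn]
    linarith [weightedCount_nonneg ℓ (n + 1)]
  set T := sqFreeWords ℓ n
  have key : (1 + √3) * weightedCount ℓ n + ∑ w ∈ T.filter NiceWord, weight w ≤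
      weightedCount ℓ (n + 1) + ∑ v ∈ (appendLetters T (ℓ n)).filter (¬ SquareFree ·), weight v :=
    calc _ = ∑ w ∈ T, (1 + √3) := by
          rw [weightedCount, mul_sum, sum_filter, ← sum_add_distrib]
          refine sum_congr rfl fun w hw => one_add_sqrt_three_mul_weight_add_ite ?_
          obtain ⟨hlen, hsf, -⟩ := mem_sqFreeWords.mp hw
          exact hsf.perfectWord_or_niceWord (by omega)
      _ ≤ ∑ w ∈ T, ∑ x ∈ ℓ n, weight (w ++ [x]) := sum_le_sum fun w hw => by
          obtain ⟨hlen, hsf, -⟩ := mem_sqFreeWords.mp hw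
          exact hsf.one_add_sqrt_three_le_sum_weight_append (by omega) hL
      _ = ∑ v ∈ appendLetters T (ℓ n), weight v := (sum_appendLetters _ _ _).symm
      _ = _ := by rw [weightedCount, sqFreeWords, sum_filter_add_sum_filter_not]
  linarith [sum_weight_filter_not_squareFree_le ℓ n]

end Recurrence

section Growth

lemma pow_sub_mul_le_of_forall_mul_le {a : ℕ → ℝ} {β : ℝ} (hβ : 0 ≤ β) {m n : ℕ} (hmn : m ≤ n)
    (h : ∀ k < n, β * a k ≤ a (k + 1)) : β ^ (n - m) * a m ≤ a n := by
  induction n, hmn using Nat.le_induction with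
  | base => simp
  | succ n hmn ih =>
    calc β ^ (n + 1 - m) * a m = β * (β ^ (n - m) * a m) := by
          rw [Nat.sub_add_comm hmn, pow_succ]; ring
      _ ≤ β * a n := mul_le_mul_of_nonneg_left (ih fun k hk => h k (by omega)) hβ
      _ ≤ a (n + 1) := h n (by omega)

lemma sum_Icc_inv_pow_le {β : ℝ} (hβ : 1 < β) (n : ℕ) :
    ∑ p ∈ Icc 3 (n + 1), β⁻¹ ^ (p - 1) ≤ 1 / (β * (β - 1)) := by
  have hβ0 : 0 < β := by linarith
  calc ∑ p ∈ Icc 3 (n + 1), β⁻¹ ^ (p - 1) = ∑ i ∈ Ico 2 (n + 1), β⁻¹ ^ i :=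
        sum_nbij' (· - 1) (· + 1) (fun p hp => by simp at hp ⊢; omega)
          (fun i hi => by simp at hi ⊢; omega) (fun p hp => by simp at hp ⊢; omega)
          (fun i _ => by simp) (fun p _ => rfl)
    _ ≤ β⁻¹ ^ 2 / (1 - β⁻¹) := geom_sum_Ico_le_of_lt_one (by positivity) (inv_lt_one_of_one_lt₀ hβ)
    _ = 1 / (β * (β - 1)) := by
      field_simp

lemma mul_le_of_recurrence {a : ℕ → ℝ} {c β : ℝ} (hβ : 1 < β) (hc : β ≤ c - 1 / (β * (β - 1)))
    (ha : ∀ n, 0 ≤ a n) (hrec : ∀ n, c * a n - ∑ p ∈ Icc 3 (n + 1), a (n + 1 - p) ≤ a (n + 1))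
    (n : ℕ) : β * a n ≤ a (n + 1) := by
  induction n using Nat.strong_induction_on with
  | _ n ih =>
  have hterm : ∀ p ∈ Icc 3 (n + 1), a (n + 1 - p) ≤ a n * β⁻¹ ^ (p - 1) := by
    intro p hp
    have hp := mem_Icc.mp hp
    have := pow_sub_mul_le_of_forall_mul_le (a := a) (by linarith) (m := n + 1 - p) (by omega) ih
    rw [show n - (n + 1 - p) = p - 1 by omega] at this
    rw [inv_pow, ← div_eq_mul_inv, le_div_iff₀ (by positivity)]
    linarith
  calc β * a n ≤ (c - 1 / (β * (β - 1))) * a n := mul_le_mul_of_nonneg_right hc (ha n)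
    _ ≤ c * a n - a n * ∑ p ∈ Icc 3 (n + 1), β⁻¹ ^ (p - 1) := by
      linarith [mul_le_mul_of_nonneg_left (sum_Icc_inv_pow_le hβ n) (ha n)]
    _ ≤ c * a n - ∑ p ∈ Icc 3 (n + 1), a (n + 1 - p) := by
      rw [mul_sum]; linarith [sum_le_sum hterm]
    _ ≤ a (n + 1) := hrec n

end Growth

theorem stmt1_general (ℓ : ℕ → Finset ℕ) (h4 : ∀ i, (ℓ i).card = 4)
    (β : ℝ) (hβ : 1 < β)
    (hcond : 1 + Real.sqrt 3 - 1 / (β * (β - 1)) ≥ β)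
    (n : ℕ) :
    hatCount {w : List ℕ | w.length = n + 1 ∧ SquareFree w ∧ Respects ℓ w} ≥
      β * hatCount {w : List ℕ | w.length = n ∧ SquareFree w ∧ Respects ℓ w} := by
  rw [← coe_sqFreeWords, ← coe_sqFreeWords, hatCount_coe, hatCount_coe]
  exact mul_le_of_recurrence hβ hcond (weightedCount_nonneg ℓ)
    (fun m => weightedCount_recurrence (h4 m).ge) n

/-- For every 4-list assignment, if `β > 1` satisfies `1 + √3 - 1/(β(β-1)) ≥ β`,
then for every `n ≥ 3` the weighted count of square-free words of length `n + 1`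
respecting the assignment is at least `β` times that for length `n`. -/
theorem stmt1 (ℓ : ℕ → Finset ℕ) (h4 : ∀ i, (ℓ i).card = 4)
    (β : ℝ) (hβ : 1 < β)
    (hcond : 1 + Real.sqrt 3 - 1 / (β * (β - 1)) ≥ β)
    (n : ℕ) (hn : 3 ≤ n) :
    hatCount {w : List ℕ | w.length = n + 1 ∧ SquareFree w ∧ Respects ℓ w} ≥
      β * hatCount {w : List ℕ | w.length = n ∧ SquareFree w ∧ Respects ℓ w} :=
  stmt1_general ℓ h4 β hβ hcond n
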